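/- Let a₁₁, a₂₂, a₃₃, a₁₂, a₂₃, a₃₁ > 0 and a₂₁, a₃₂ ≥ 0, and let A = [[−a₁₁, a₁₂, 0], [a₂₁, −a₂₂, a₂₃], [a₃₁, a₃₂, −a₃₃]]. Define ã₂₂ := a₂₂ − a₁₂a₂₁/a₁₁ and ã₂₃ := ã₃₂ := √(a₂₃a₃₂ + a₁₂a₂₃a₃₁/a₁₁). Then for all d₂, d₃ ≥ 0, det(diag(0, d₂, d₃) − A) = a₁₁ · [(d₂ + ã₂₂)(d₃ + a₃₃) − ã₂₃ã₃₂]; equivalently, det(−A)/det(diag(0,d₂,d₃) − A) = det(−A*)/[a₁₁ · det(diag(d₂,d₃) − A*)] · a₁₁, where A* = [[−ã₂₂, ã₂₃], [ã₃₂, −a₃₃]] satisfies det(−A*) · a₁₁ = det(−A). -/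

import Mathlib

open Matrix

/-! Eliminating the first coordinate of `diag(0, d₂, d₃) − A` with the pivot `a₁₁` leaves `a₁₁` times
the determinant of a `2 × 2` Schur complement of the form `diag(d₂, d₃) − B`, where `B` does not
depend on `d₂, d₃` because the first diagonal entry is `0`. The diagonal of `B` is `(−ã₂₂, −a₃₃)`
and the product of its off-diagonal entries is `a₂₃a₃₂ + a₁₂a₂₃a₃₁/a₁₁ ≥ 0`. A `2 × 2` determinant
only sees that product, so `B` may be replaced by the symmetric `A*`. Taking `d₂ = d₃ = 0` gives
`det(−A) = a₁₁ det(−A*)`. -/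

theorem Matrix.det_fin_three_eq_mul_det_schur {K : Type*} [Field K] {a : K} (ha : a ≠ 0)
    (b c d e f g h i : K) :
    !![a, b, c; d, e, f; g, h, i].det
      = a * !![e - d * b / a, f - d * c / a; h - g * b / a, i - g * c / a].det := by
  simp [det_fin_three, det_fin_two_of]
  field_simp
  ring

theorem Matrix.diagonal_fin_three_sub_of {R : Type*} [AddGroup R] (x y z : R)
    (a b c d e f g h i : R) :
    diagonal ![x, y, z] - !![a, b, c; d, e, f; g, h, i]
      = !![x - a, -b, -c; -d, y - e, -f; -g, -h, z - i] := by
  ext i j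
  fin_cases i <;> fin_cases j <;> simp

theorem Matrix.diagonal_fin_two_sub_of {R : Type*} [AddGroup R] (x y a b c d : R) :
    diagonal ![x, y] - !![a, b; c, d] = !![x - a, -b; -c, y - d] := by
  ext i j
  fin_cases i <;> fin_cases j <;> simp

theorem laplace_reduction_to_two_dims (a11 a22 a33 a12 a23 a31 a21 a32 : ℝ)
    (h11 : 0 < a11)
    (h12 : 0 < a12) (h23 : 0 < a23) (h31 : 0 < a31)
    (h32 : 0 ≤ a32)
    (A : Matrix (Fin 3) (Fin 3) ℝ)
    (hA : A = Matrix.of ![![-a11, a12, 0], ![a21, -a22, a23], ![a31, a32, -a33]])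
    (ta22 ta23 ta32 : ℝ)
    (hta22 : ta22 = a22 - a12 * a21 / a11)
    (hta23 : ta23 = Real.sqrt (a23 * a32 + a12 * a23 * a31 / a11))
    (hta32 : ta32 = ta23)
    (Astar : Matrix (Fin 2) (Fin 2) ℝ)
    (hAstar : Astar = Matrix.of ![![-ta22, ta23], ![ta32, -a33]]) :
    ∀ d2 d3 : ℝ, 0 ≤ d2 → 0 ≤ d3 →
      (Matrix.diagonal ![0, d2, d3] - A).det
          = a11 * ((d2 + ta22) * (d3 + a33) - ta23 * ta32) ∧
        (-Astar).det * a11 = (-A).det ∧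
        (-A).det / (Matrix.diagonal ![0, d2, d3] - A).det
          = (-Astar).det / (a11 * (Matrix.diagonal ![d2, d3] - Astar).det) * a11 := by
  have off_diag : ta23 * ta32 = a23 * (a32 + a31 * a12 / a11) := by
    rw [hta32, hta23, Real.mul_self_sqrt (by positivity)]
    ring
  have det_two (d2 d3 : ℝ) :
      (diagonal ![d2, d3] - Astar).det = (d2 + ta22) * (d3 + a33) - ta23 * ta32 := by
    rw [hAstar, diagonal_fin_two_sub_of, det_fin_two_of]
    ring
  have reduction (d2 d3 : ℝ) :
      (diagonal ![0, d2, d3] - A).det = a11 * (diagonal ![d2, d3] - Astar).det := by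
    rw [hA, diagonal_fin_three_sub_of, det_fin_three_eq_mul_det_schur (by simpa using h11.ne'),
      hAstar, diagonal_fin_two_sub_of, det_fin_two_of, det_fin_two_of, neg_mul_neg ta23, off_diag,
      hta22]
    simp only [sub_neg_eq_add, zero_add]
    field_simp
    ring
  have at_zero : (-A).det = a11 * (-Astar).det := by
    simpa only [← zero_empty, cons_zero_zero, diagonal_zero', zero_sub] using reduction 0 0
  intro d2 d3 _ _
  refine ⟨by rw [reduction, det_two], by rw [at_zero, mul_comm], ?_⟩
  rw [reduction, at_zero]
  ring
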